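/- (Example 5.9(2), inequality between the distances on the annulus.) Fix a real number r with 0 < r < 2^{1/3} − 1 and let A(r) := {z ∈ ℂ : r < |z| < 1}. Define d_{a(r)}(z,w) := max{ d_𝔻(z,w), d_𝔻(r/z, r/w) } for z, w ∈ A(r). Then d_{a(r)}(√r, −√r) = 2√r/(1+r), and d_{a(r)}(√r, −√r) < d_{A(r)}(√r, −√r), where d_{A(r)} is the Möbius pseudo-distance of the domain A(r). In particular d_{a(r)} does not coincide with d_{A(r)}. -/

import Mathlib

open scoped Matrix.Norms.L2Operator ComplexOrder
open Matrix

noncomputable section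

open scoped Classical in
/-- Square root of a positive semidefinite matrix (junk value `0` otherwise). -/
def msqrt {n' : Type*} [Fintype n'] [DecidableEq n'] (M : Matrix n' n' ℂ) : Matrix n' n' ℂ :=
  if h : M.PosSemidef then
    h.1.eigenvectorUnitary.1 * diagonal ((↑) ∘ Real.sqrt ∘ h.1.eigenvalues) *
      (star h.1.eigenvectorUnitary : Matrix n' n' ℂ)
  else 0

/-- The pseudo-distance `d_Δ`. -/
def dDelta {α m' n' : Type*} [Fintype m'] [Fintype n'] [DecidableEq m'] [DecidableEq n']
    (Δ : α → Matrix m' n' ℂ) (z w : α) : ℝ :=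
  ‖(msqrt (1 - Δ w * (Δ w)ᴴ))⁻¹ * ((Δ z - Δ w) *
      ((1 - (Δ w)ᴴ * Δ z)⁻¹ * msqrt (1 - (Δ w)ᴴ * Δ w)))‖

/-- `B_Δ = {z ∈ E : ‖Δ(z)‖ < 1}`. -/
def BDelta {α m' n' : Type*} [Fintype m'] [Fintype n'] [DecidableEq n'] (E : Set α)
    (Δ : α → Matrix m' n' ℂ) : Set α :=
  {z | z ∈ E ∧ ‖Δ z‖ < 1}

/-- pseudo-hyperbolic distance on the unit disk -/
def dDisk (a b : ℂ) : ℝ := ‖a - b‖ / ‖1 - (starRingEnd ℂ) b * a‖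

/-- elementary tensor `ξ ⊗ v` in `ℂ^m ⊗ ℂ^2`, realized as a function on `m × Fin 2` -/
def tpr {m' : Type*} (ξ : m' → ℂ) (v : Fin 2 → ℂ) : m' × Fin 2 → ℂ :=
  fun p => ξ p.1 * v p.2

/-- inner product, conjugate-linear in the second variable -/
def herm {m' : Type*} [Fintype m'] (ξ η : m' → ℂ) : ℂ :=
  ∑ p, ξ p * (starRingEnd ℂ) (η p)

/-- positive semidefiniteness of a `2 × 2` kernel `(a i j)` -/
def PSD2 (a : Fin 2 → Fin 2 → ℂ) : Prop :=
  ∀ c : Fin 2 → ℂ, 0 ≤ ∑ i, ∑ j, a i j * c i * (starRingEnd ℂ) (c j)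

/-- `T` is a generic tuple with joint eigenvectors `v` and joint eigenvalues `z 0 ≠ z 1`. -/
def IsGenericTuple {d : ℕ} (T : Fin d → Matrix (Fin 2) (Fin 2) ℂ)
    (v : Fin 2 → Fin 2 → ℂ) (z : Fin 2 → Fin d → ℂ) : Prop :=
  LinearIndependent ℂ v ∧ z 0 ≠ z 1 ∧ ∀ i j, T i *ᵥ v j = z j i • v j

/-- `‖Δ(T)‖ ≤ 1`, where `Δ(T)` is the matrix on `ℂ^s ⊗ ℂ^2` determined by
`Δ(T)(e_i ⊗ v_j) = (Δ(z_j) e_i) ⊗ v_j`. -/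
def DeltaTContract {β : Type*} {s r : ℕ} (Δ : β → Matrix (Fin s) (Fin r) ℂ)
    (v : Fin 2 → Fin 2 → ℂ) (z : Fin 2 → β) : Prop :=
  ∀ DT : Matrix (Fin s × Fin 2) (Fin r × Fin 2) ℂ,
    (∀ (i : Fin r) (j : Fin 2),
      DT *ᵥ tpr (Pi.single i 1) (v j) = tpr (Δ (z j) *ᵥ Pi.single i 1) (v j)) →
    ‖DT‖ ≤ 1

/-- membership in the class `S_{2,gen}(B_Δ)` -/
def MemS2gen {d s r : ℕ} (E : Set (Fin d → ℂ)) (Δ : (Fin d → ℂ) → Matrix (Fin s) (Fin r) ℂ)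
    (f : (Fin d → ℂ) → ℂ) : Prop :=
  ∀ (T : Fin d → Matrix (Fin 2) (Fin 2) ℂ) (v : Fin 2 → Fin 2 → ℂ) (z : Fin 2 → Fin d → ℂ),
    IsGenericTuple T v z → (∀ j, z j ∈ BDelta E Δ) → DeltaTContract Δ v z →
    ∀ fT : Matrix (Fin 2) (Fin 2) ℂ, (∀ j, fT *ᵥ v j = f (z j) • v j) → ‖fT‖ ≤ 1

/-- the Möbius pseudo-distance of a domain `Ω` -/
def dMobius {α : Type*} [NormedAddCommGroup α] [NormedSpace ℂ α] (Ω : Set α) (z w : α) : ℝ :=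
  sSup {x | ∃ g : α → ℂ, DifferentiableOn ℂ g Ω ∧ (∀ ζ ∈ Ω, ‖g ζ‖ < 1) ∧ x = dDisk (g z) (g w)}

/-- `Ω` is a complete spectral domain for the diagonalizable tuple with eigenvectors `v` and
joint eigenvalues `z 0, z 1`. -/
def IsCompleteSpectralDomainFor {α : Type*} [NormedAddCommGroup α] [NormedSpace ℂ α]
    (Ω : Set α) (v : Fin 2 → Fin 2 → ℂ) (z : Fin 2 → α) : Prop :=
  ∀ (n : ℕ) (F : α → Matrix (Fin n) (Fin n) ℂ),
    (∀ i j, DifferentiableOn ℂ (fun ζ => F ζ i j) Ω) →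
    ∀ C : ℝ, (∀ ζ ∈ Ω, ‖F ζ‖ ≤ C) →
    ∀ FT : Matrix (Fin n × Fin 2) (Fin n × Fin 2) ℂ,
      (∀ (ξ : Fin n → ℂ) (j : Fin 2), FT *ᵥ tpr ξ (v j) = tpr (F (z j) *ᵥ ξ) (v j)) →
      ‖FT‖ ≤ C

/-- the annulus `A(r) = {ζ : r < |ζ| < 1}` -/
def annulus (r : ℝ) : Set ℂ := {ζ : ℂ | r < ‖ζ‖ ∧ ‖ζ‖ < 1}

/-- the pseudo-distance `d_{a(r)}` of the annulus, coming from `a(r)(ζ) = diag(ζ, r/ζ)` -/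
def dAnn (r : ℝ) (z w : ℂ) : ℝ := max (dDisk z w) (dDisk ((r : ℂ) / z) ((r : ℂ) / w))


/-!
The normalized Joukowski map `J(z) = (z + r/z)/(1 + r)` sends `A(r)` into the unit disk, because
`|z| + r/|z| < 1 + r` for `r < |z| < 1`, and it sends `±√r` to `±t` with `t = 2√r/(1 + r)`, which
is exactly `d_{a(r)}(√r, -√r)`. Hence `d_{A(r)}(√r, -√r) ≥ d_𝔻(t, -t) = 2t/(1 + t²) > t`.
-/

theorem norm_one_sub_conj_mul_sq_sub_norm_sub_sq (a b : ℂ) :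
    ‖1 - starRingEnd ℂ b * a‖ ^ 2 - ‖a - b‖ ^ 2 = (1 - ‖a‖ ^ 2) * (1 - ‖b‖ ^ 2) := by
  simp only [← Complex.normSq_eq_norm_sq, Complex.normSq_apply, Complex.sub_re, Complex.sub_im,
    Complex.mul_re, Complex.mul_im, Complex.one_re, Complex.one_im, Complex.conj_re,
    Complex.conj_im]
  ring

theorem dDisk_lt_one {a b : ℂ} (ha : ‖a‖ < 1) (hb : ‖b‖ < 1) : dDisk a b < 1 := by
  have hsq : ‖a - b‖ ^ 2 < ‖1 - starRingEnd ℂ b * a‖ ^ 2 := by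
    have := norm_one_sub_conj_mul_sq_sub_norm_sub_sq a b
    have : 0 < (1 - ‖a‖ ^ 2) * (1 - ‖b‖ ^ 2) := by
      apply mul_pos <;> nlinarith [norm_nonneg a, norm_nonneg b]
    linarith
  have hlt := lt_of_pow_lt_pow_left₀ 2 (norm_nonneg _) hsq
  rw [dDisk, div_lt_one ((norm_nonneg _).trans_lt hlt)]
  exact hlt

theorem dDisk_ofReal_neg_ofReal {u : ℝ} (hu : 0 ≤ u) :
    dDisk (u : ℂ) (-(u : ℂ)) = 2 * u / (1 + u ^ 2) := by
  have hnum : (u : ℂ) - -(u : ℂ) = ((2 * u : ℝ) : ℂ) := by push_cast; ring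
  have hden : 1 - starRingEnd ℂ (-(u : ℂ)) * u = ((1 + u ^ 2 : ℝ) : ℂ) := by
    rw [map_neg, Complex.conj_ofReal]; push_cast; ring
  rw [dDisk, hnum, hden, Complex.norm_real, Complex.norm_real, Real.norm_of_nonneg (by positivity),
    Real.norm_of_nonneg (by positivity)]

theorem lt_two_mul_div_one_add_sq {t : ℝ} (ht0 : 0 < t) (ht1 : t < 1) : t < 2 * t / (1 + t ^ 2) := by
  rw [lt_div_iff₀ (by positivity)]
  nlinarith

theorem dDisk_le_dMobius {α : Type*} [NormedAddCommGroup α] [NormedSpace ℂ α] {Ω : Set α}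
    {z w : α} (hz : z ∈ Ω) (hw : w ∈ Ω) {g : α → ℂ} (hg : DifferentiableOn ℂ g Ω)
    (hg1 : ∀ ζ ∈ Ω, ‖g ζ‖ < 1) : dDisk (g z) (g w) ≤ dMobius Ω z w := by
  refine le_csSup ⟨1, ?_⟩ ⟨g, hg, hg1, rfl⟩
  rintro _ ⟨f, -, hf1, rfl⟩
  exact (dDisk_lt_one (hf1 z hz) (hf1 w hw)).le

theorem ne_zero_of_mem_annulus {r : ℝ} (hr : 0 ≤ r) {ζ : ℂ} (hζ : ζ ∈ annulus r) : ζ ≠ 0 :=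
  norm_pos_iff.mp (hr.trans_lt hζ.1)

theorem neg_mem_annulus {r : ℝ} {ζ : ℂ} (hζ : ζ ∈ annulus r) : -ζ ∈ annulus r := by
  simpa only [annulus, Set.mem_ofPred, norm_neg] using hζ

theorem sqrt_mem_annulus {r : ℝ} (hr0 : 0 < r) (hr1 : r < 1) : (Real.sqrt r : ℂ) ∈ annulus r := by
  rw [annulus, Set.mem_ofPred, Complex.norm_real, Real.norm_of_nonneg (Real.sqrt_nonneg r)]
  exact ⟨(Real.lt_sqrt hr0.le).mpr (by nlinarith), (Real.sqrt_lt' one_pos).mpr (by linarith)⟩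

theorem ofReal_div_ofReal_sqrt {r : ℝ} (hr : 0 ≤ r) : (r : ℂ) / (Real.sqrt r : ℂ) = Real.sqrt r := by
  nth_rewrite 1 [← Real.mul_self_sqrt hr]
  push_cast
  rcases eq_or_ne (Real.sqrt r : ℂ) 0 with h | h
  · simp [h]
  · exact mul_div_cancel_right₀ _ h

theorem dAnn_sqrt_neg_sqrt {r : ℝ} (hr : 0 ≤ r) :
    dAnn r (Real.sqrt r : ℂ) (-(Real.sqrt r : ℂ)) = 2 * Real.sqrt r / (1 + r) := by
  rw [dAnn, div_neg, ofReal_div_ofReal_sqrt hr, max_self,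
    dDisk_ofReal_neg_ofReal (Real.sqrt_nonneg r), Real.sq_sqrt hr]

def joukowski (r : ℝ) (z : ℂ) : ℂ := (z + r / z) / (1 + r)

theorem joukowski_neg (r : ℝ) (z : ℂ) : joukowski r (-z) = -joukowski r z := by
  simp only [joukowski, div_neg]
  ring

theorem joukowski_sqrt {r : ℝ} (hr : 0 ≤ r) :
    joukowski r (Real.sqrt r) = ((2 * Real.sqrt r / (1 + r) : ℝ) : ℂ) := by
  rw [joukowski, ofReal_div_ofReal_sqrt hr]
  push_cast
  ring

theorem differentiableOn_joukowski {r : ℝ} (hr : 0 ≤ r) :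
    DifferentiableOn ℂ (joukowski r) (annulus r) :=
  (differentiableOn_id.add
    ((differentiableOn_const _).div differentiableOn_id
      fun _ hζ => ne_zero_of_mem_annulus hr hζ)).div_const _

theorem norm_joukowski_lt_one {r : ℝ} (hr : 0 < r) {ζ : ℂ} (hζ : ζ ∈ annulus r) :
    ‖joukowski r ζ‖ < 1 := by
  obtain ⟨hrζ, hζ1⟩ := hζ
  have hζ0 : 0 < ‖ζ‖ := hr.trans hrζ
  have hnorm : ‖(1 + r : ℂ)‖ = 1 + r := by
    exact_mod_cast Real.norm_of_nonneg (by linarith : (0 : ℝ) ≤ 1 + r)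
  rw [joukowski, norm_div, hnorm, div_lt_one (by linarith)]
  calc ‖ζ + r / ζ‖ ≤ ‖ζ‖ + r / ‖ζ‖ := by
        simpa [norm_div, Complex.norm_real, abs_of_pos hr] using norm_add_le ζ (r / ζ)
    _ < 1 + r := by
        rw [← sub_pos]
        have : 1 + r - (‖ζ‖ + r / ‖ζ‖) = (1 - ‖ζ‖) * (‖ζ‖ - r) / ‖ζ‖ := by field_simp; ring
        rw [this]
        exact div_pos (mul_pos (by linarith) (by linarith)) hζ0

theorem dAnn_lt_dMobius_annulus_of_lt_one {r : ℝ} (hr0 : 0 < r) (hr1 : r < 1) :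
    dAnn r (Real.sqrt r : ℂ) (-(Real.sqrt r : ℂ)) <
      dMobius (annulus r) (Real.sqrt r : ℂ) (-(Real.sqrt r : ℂ)) := by
  have hmem := sqrt_mem_annulus hr0 hr1
  set t := 2 * Real.sqrt r / (1 + r)
  have ht0 : 0 < t := by positivity
  have ht1 : t < 1 := by
    rw [div_lt_one (by linarith)]
    nlinarith [Real.sq_sqrt hr0.le, hmem.2]
  calc dAnn r (Real.sqrt r : ℂ) (-(Real.sqrt r : ℂ)) = t := dAnn_sqrt_neg_sqrt hr0.le
    _ < 2 * t / (1 + t ^ 2) := lt_two_mul_div_one_add_sq ht0 ht1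
    _ = dDisk (joukowski r (Real.sqrt r)) (joukowski r (-(Real.sqrt r : ℂ))) := by
        rw [joukowski_neg, joukowski_sqrt hr0.le, dDisk_ofReal_neg_ofReal ht0.le]
    _ ≤ _ := dDisk_le_dMobius hmem (neg_mem_annulus hmem) (differentiableOn_joukowski hr0.le)
        fun _ hζ => norm_joukowski_lt_one hr0 hζ

/-- **Example 5.9(2)**: for `0 < r < 2^{1/3} − 1`, the pseudo-distance `d_{a(r)}` is strictly
smaller than the Möbius pseudo-distance of the annulus at the points `±√r`. -/
theorem dAnn_lt_dMobius_annulus (r : ℝ) (hr0 : 0 < r)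
    (hr1 : r < (2 : ℝ) ^ ((1 : ℝ) / 3) - 1) :
    dAnn r (Real.sqrt r : ℂ) (-(Real.sqrt r : ℂ)) = 2 * Real.sqrt r / (1 + r) ∧
    dAnn r (Real.sqrt r : ℂ) (-(Real.sqrt r : ℂ)) <
      dMobius (annulus r) (Real.sqrt r : ℂ) (-(Real.sqrt r : ℂ)) := by
  have hcube_root : (2 : ℝ) ^ ((1 : ℝ) / 3) ≤ 2 :=
    Real.rpow_le_self_of_one_le (by norm_num) (by norm_num)
  exact ⟨dAnn_sqrt_neg_sqrt hr0.le, dAnn_lt_dMobius_annulus_of_lt_one hr0 (by linarith)⟩
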